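/- arXiv:2006.05802 — 6 statements merged into one kernel-verified Lean document; each statement's English description precedes it below -/
import Mathlib

section
/- Let K : X → Y be a bounded operator between Banach spaces and let Y₀ be a closed subspace of Y such that Q_{Y₀} ∘ K is surjective, where Q_{Y₀} : Y → Y/Y₀ is the quotient map. If E is a closed subspace of X such that K⁻¹(Y₀) ⊆ E, then Y contains a closed subspace F such that Y₀ ⊆ F and E = K⁻¹(F). Moreover, if E is infinite-codimensional in X, then F is infinite-codimensional in Y. -/
open Function

/-- `T` is upper semi-Fredholm: finite-dimensional kernel and closed range. -/
def UpperSemiFredholm {X Y : Type*} [NormedAddCommGroup X] [NormedSpace ℝ X]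
    [NormedAddCommGroup Y] [NormedSpace ℝ Y] (T : X →L[ℝ] Y) : Prop :=
  FiniteDimensional ℝ (LinearMap.ker (T : X →ₗ[ℝ] Y)) ∧ IsClosed (LinearMap.range (T : X →ₗ[ℝ] Y) : Set Y)

/-- `T` is lower semi-Fredholm: closed range of finite codimension. -/
def LowerSemiFredholm {X Y : Type*} [NormedAddCommGroup X] [NormedSpace ℝ X]
    [NormedAddCommGroup Y] [NormedSpace ℝ Y] (T : X →L[ℝ] Y) : Prop :=
  IsClosed (LinearMap.range (T : X →ₗ[ℝ] Y) : Set Y) ∧ FiniteDimensional ℝ (Y ⧸ LinearMap.range (T : X →ₗ[ℝ] Y))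

/-- The perturbation class of the upper semi-Fredholm operators. -/
def PertUpperSemiFredholm {X Y : Type*} [NormedAddCommGroup X] [NormedSpace ℝ X]
    [NormedAddCommGroup Y] [NormedSpace ℝ Y] (K : X →L[ℝ] Y) : Prop :=
  ∀ T : X →L[ℝ] Y, UpperSemiFredholm T → UpperSemiFredholm (T + K)

/-- The perturbation class of the lower semi-Fredholm operators. -/
def PertLowerSemiFredholm {X Y : Type*} [NormedAddCommGroup X] [NormedSpace ℝ X]
    [NormedAddCommGroup Y] [NormedSpace ℝ Y] (K : X →L[ℝ] Y) : Prop :=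
  ∀ T : X →L[ℝ] Y, LowerSemiFredholm T → LowerSemiFredholm (T + K)

/-- `K` is strictly singular: it is an isomorphism (bounded below) on no
infinite-dimensional closed subspace. -/
def StrictlySingular {X Y : Type*} [NormedAddCommGroup X] [NormedSpace ℝ X]
    [NormedAddCommGroup Y] [NormedSpace ℝ Y] (K : X →L[ℝ] Y) : Prop :=
  ¬ ∃ U : Submodule ℝ X, IsClosed (U : Set X) ∧ ¬ FiniteDimensional ℝ U ∧
      ∃ c : ℝ, 0 < c ∧ ∀ u ∈ U, c * ‖u‖ ≤ ‖K u‖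

/-- `K` is strictly cosingular: its composition with the quotient map of a closed
infinite-codimensional subspace is never surjective. -/
def StrictlyCosingular {X Y : Type*} [NormedAddCommGroup X] [NormedSpace ℝ X]
    [NormedAddCommGroup Y] [NormedSpace ℝ Y] (K : X →L[ℝ] Y) : Prop :=
  ¬ ∃ Z : Submodule ℝ Y, IsClosed (Z : Set Y) ∧ ¬ FiniteDimensional ℝ (Y ⧸ Z) ∧
      Surjective (Z.mkQ ∘ K)

/-- A Banach space is subprojective if every closed infinite-dimensional subspace
contains an infinite-dimensional closed complemented subspace. -/
def Subprojective (X : Type*) [NormedAddCommGroup X] [NormedSpace ℝ X] : Prop :=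
  ∀ U : Submodule ℝ X, IsClosed (U : Set X) → ¬ FiniteDimensional ℝ U →
    ∃ V : Submodule ℝ X, V ≤ U ∧ IsClosed (V : Set X) ∧ ¬ FiniteDimensional ℝ V ∧
      V.ClosedComplemented

/-- A Banach space is superprojective if every closed infinite-codimensional subspace
is contained in a closed infinite-codimensional complemented subspace. -/
def Superprojective (X : Type*) [SeminormedAddCommGroup X] [NormedSpace ℝ X] : Prop :=
  ∀ Z : Submodule ℝ X, IsClosed (Z : Set X) → ¬ FiniteDimensional ℝ (X ⧸ Z) →
    ∃ W : Submodule ℝ X, Z ≤ W ∧ IsClosed (W : Set X) ∧ ¬ FiniteDimensional ℝ (X ⧸ W) ∧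
      W.ClosedComplemented


/-!
The map `S = Q_{Y₀} ∘ K : X → Y ⧸ Y₀` is a surjection between Banach spaces, hence open, and its
kernel `K⁻¹(Y₀)` lies in `E`. So `E = S⁻¹(S E)` and `S E` is closed; take `F = Q_{Y₀}⁻¹(S E)`.
Both `X ⧸ E` and `Y ⧸ F` are then isomorphic to `(Y ⧸ Y₀) ⧸ S E`.
-/

namespace Submodule

noncomputable def quotComapEquivOfSurjective {R M N : Type*} [Ring R] [AddCommGroup M]
    [Module R M] [AddCommGroup N] [Module R N] (f : M →ₗ[R] N) (hf : Surjective f)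
    (p : Submodule R N) : (M ⧸ p.comap f) ≃ₗ[R] N ⧸ p :=
  (quotEquivOfEq _ _ (by rw [LinearMap.ker_comp, ker_mkQ])).trans
    ((p.mkQ ∘ₗ f).quotKerEquivOfSurjective (p.mkQ_surjective.comp hf))

theorem isClosed_map_of_ker_le {𝕜 X Z : Type*} [NontriviallyNormedField 𝕜]
    [NormedAddCommGroup X] [NormedSpace 𝕜 X] [CompleteSpace X]
    [NormedAddCommGroup Z] [NormedSpace 𝕜 Z] [CompleteSpace Z]
    (S : X →L[𝕜] Z) (hS : Surjective S) {E : Submodule 𝕜 X} (hE : IsClosed (E : Set X))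
    (hker : LinearMap.ker (S : X →ₗ[𝕜] Z) ≤ E) :
    IsClosed (E.map (S : X →ₗ[𝕜] Z) : Set Z) := by
  rw [← (S.isQuotientMap hS).isClosed_preimage]
  rwa [← comap_map_eq_self hker] at hE

end Submodule

theorem exists_closed_subspace_preimage
    {X Y : Type*} [NormedAddCommGroup X] [NormedSpace ℝ X] [CompleteSpace X]
    [NormedAddCommGroup Y] [NormedSpace ℝ Y] [CompleteSpace Y]
    (K : X →L[ℝ] Y) (Y₀ : Submodule ℝ Y) (hY₀ : IsClosed (Y₀ : Set Y))
    (hsurj : Surjective (Y₀.mkQ ∘ K))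
    (E : Submodule ℝ X) (hE : IsClosed (E : Set X)) (hsub : Y₀.comap (K : X →ₗ[ℝ] Y) ≤ E) :
    ∃ F : Submodule ℝ Y, IsClosed (F : Set Y) ∧ Y₀ ≤ F ∧ E = F.comap (K : X →ₗ[ℝ] Y) ∧
      (¬ FiniteDimensional ℝ (X ⧸ E) → ¬ FiniteDimensional ℝ (Y ⧸ F)) := by
  -- the instance making `Y ⧸ Y₀` a Banach space
  have : IsClosed (Y₀ : Set Y) := hY₀
  let S : X →L[ℝ] Y ⧸ Y₀ := Y₀.mkQL.comp K
  have hker : LinearMap.ker (S : X →ₗ[ℝ] Y ⧸ Y₀) ≤ E := by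
    change LinearMap.ker (Y₀.mkQ ∘ₗ (K : X →ₗ[ℝ] Y)) ≤ E
    rwa [LinearMap.ker_comp, Submodule.ker_mkQ]
  let G := E.map (S : X →ₗ[ℝ] Y ⧸ Y₀)
  have hEG : E = G.comap (S : X →ₗ[ℝ] Y ⧸ Y₀) := (Submodule.comap_map_eq_self hker).symm
  refine ⟨G.comap Y₀.mkQ, ?_, Y₀.le_comap_mkQ G, hEG, fun hXE hYF => hXE ?_⟩
  · exact (Submodule.isClosed_map_of_ker_le S hsurj hE hker).preimage Y₀.mkQL.continuous
  · have eY := Submodule.quotComapEquivOfSurjective Y₀.mkQ Y₀.mkQ_surjective G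
    have eX := (Submodule.quotEquivOfEq _ _ hEG).trans
      (Submodule.quotComapEquivOfSurjective _ hsurj G)
    exact Module.Finite.equiv (eY.trans eX.symm)
end

section
/- Let X and Y be Banach spaces. If the set Φ₊(X,Y) of upper semi-Fredholm operators from X to Y is nonempty and Y is subprojective, then X is subprojective. -/
open Function

/-! On a closed complement `M` of the finite-dimensional kernel of an upper semi-Fredholm `T`,
`T` is injective with closed range, hence a closed embedding by the open mapping theorem.
Subprojectivity pulls back along a closed embedding `f`: a complemented subspace of `f(U)` has
the projection `f⁻¹ ∘ P ∘ f` on its preimage. It then passes from the closed finite-codimensional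
subspace `M` to `X`, because every infinite-dimensional `U` meets `M` in an infinite-dimensional
subspace and `M` is itself complemented. -/

open Topology

namespace Submodule

variable {R X Y : Type*} [Ring R] [TopologicalSpace X] [AddCommGroup X] [Module R X]
  [TopologicalSpace Y] [AddCommGroup Y] [Module R Y]

theorem ClosedComplemented.map_of_leftInverse {p : Submodule R X} (hp : p.ClosedComplemented)
    (f : X →L[R] Y) (g : Y →L[R] X) (hgf : LeftInverse g f) :
    (p.map (f : X →ₗ[R] Y)).ClosedComplemented := by
  obtain ⟨P, hP⟩ := hp
  refine ⟨(f ∘L p.subtypeL ∘L P ∘L g).codRestrict _ fun y ↦ mem_map_of_mem (P (g y)).2, ?_⟩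
  rintro ⟨_, x, hx, rfl⟩
  ext
  change f (P (g (f x))) = f x
  rw [hgf x, hP ⟨x, hx⟩]

theorem ClosedComplemented.comap_of_isEmbedding {q : Submodule R Y} (hq : q.ClosedComplemented)
    (f : X →L[R] Y) (hf : IsEmbedding f) (hle : q ≤ LinearMap.range (f : X →ₗ[R] Y)) :
    (q.comap (f : X →ₗ[R] Y)).ClosedComplemented := by
  obtain ⟨P, hP⟩ := hq
  let proj : X →ₗ[R] X := (LinearEquiv.ofInjective (f : X →ₗ[R] Y) hf.injective).symm.toLinearMap ∘ₗ
    inclusion hle ∘ₗ (P : Y →ₗ[R] q) ∘ₗ (f : X →ₗ[R] Y)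
  have hfproj : ∀ x, f (proj x) = P (f x) := fun x ↦
    LinearEquiv.ofInjective_symm_apply (h := hf.injective) _ _
  have hproj : Continuous proj := hf.continuous_iff.2 <| by
    simpa [Function.comp_def, hfproj] using
      continuous_subtype_val.comp (P.continuous.comp f.continuous)
  refine ⟨(⟨proj, hproj⟩ : X →L[R] X).codRestrict _ fun x ↦ ?_, fun v ↦ ?_⟩
  · simp [hfproj]
  · exact Subtype.ext <| hf.injective <| by simp [hfproj, hP ⟨f v, v.2⟩]

theorem finiteDimensional_of_finiteDimensional_inf {K V : Type*} [DivisionRing K]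
    [AddCommGroup V] [Module K V] (U M : Submodule K V) [FiniteDimensional K (V ⧸ M)]
    [FiniteDimensional K ↥(U ⊓ M)] : FiniteDimensional K U := by
  refine Module.Finite.iff_fg.2 <| fg_of_fg_map_of_fg_inf_ker M.mkQ ?_ ?_
  · exact IsNoetherian.noetherian _
  · rw [M.ker_mkQ]
    exact Module.Finite.iff_fg.1 inferInstance

end Submodule

theorem ContinuousLinearMap.isClosedEmbedding_of_injective_of_isClosed_range {𝕜 E F : Type*}
    [NontriviallyNormedField 𝕜] [NormedAddCommGroup E] [NormedSpace 𝕜 E] [CompleteSpace E]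
    [NormedAddCommGroup F] [NormedSpace 𝕜 F] [CompleteSpace F] (f : E →L[𝕜] F)
    (hf : Injective f) (hf' : IsClosed (Set.range f)) : IsClosedEmbedding f :=
  have ⟨_, hK⟩ := f.antilipschitz_of_injective_of_isClosed_range hf hf'
  hK.isClosedEmbedding f.uniformContinuous

namespace Subprojective

variable {X Y : Type*} [NormedAddCommGroup X] [NormedSpace ℝ X] [NormedAddCommGroup Y]
  [NormedSpace ℝ Y]

theorem of_isClosedEmbedding (hY : Subprojective Y) (f : X →L[ℝ] Y) (hf : IsClosedEmbedding f) :
    Subprojective X := by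
  intro U hU hUinf
  have eU := Submodule.equivMapOfInjective (f : X →ₗ[ℝ] Y) hf.injective U
  obtain ⟨V, hVU, hVc, hVinf, hV⟩ := hY (U.map (f : X →ₗ[ℝ] Y)) (hf.isClosedMap _ hU)
    fun _ ↦ hUinf eU.symm.finiteDimensional
  have hle : V ≤ LinearMap.range (f : X →ₗ[ℝ] Y) := hVU.trans LinearMap.map_le_range
  refine ⟨V.comap (f : X →ₗ[ℝ] Y), ?_, hVc.preimage f.continuous, fun _ ↦ hVinf ?_,
    hV.comap_of_isEmbedding f hf.isEmbedding hle⟩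
  · simpa [Submodule.comap_map_eq_of_injective hf.injective] using
      Submodule.comap_mono (f := (f : X →ₗ[ℝ] Y)) hVU
  · have := Module.Finite.map (V.comap (f : X →ₗ[ℝ] Y)) (f : X →ₗ[ℝ] Y)
    rwa [Submodule.map_comap_eq, inf_eq_right.2 hle] at this

theorem of_finiteDimensional_quotient {M : Submodule ℝ X} (hM : IsClosed (M : Set X))
    [FiniteDimensional ℝ (X ⧸ M)] (h : Subprojective M) : Subprojective X := by
  intro U hU hUinf
  have hUM : ¬ FiniteDimensional ℝ ↥(U.comap M.subtype) := fun _ ↦ by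
    have := Module.Finite.map (U.comap M.subtype) M.subtype
    rw [Submodule.map_comap_subtype, inf_comm] at this
    exact hUinf (U.finiteDimensional_of_finiteDimensional_inf M)
  obtain ⟨V, hVU, hVc, hVinf, hV⟩ := h _ (hU.preimage continuous_subtype_val) hUM
  obtain ⟨P, hP⟩ := Submodule.ClosedComplemented.of_finiteDimensional_quotient hM
  refine ⟨V.map M.subtype, ?_, hM.isClosedEmbedding_subtypeVal.isClosedMap _ hVc,
    fun _ ↦ hVinf ?_, hV.map_of_leftInverse M.subtypeL P hP⟩
  · rintro _ ⟨x, hx, rfl⟩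
    exact hVU hx
  · exact (Submodule.equivMapOfInjective M.subtype Subtype.val_injective V).symm.finiteDimensional

end Subprojective

theorem UpperSemiFredholm.exists_isClosedEmbedding_comp_subtypeL {X Y : Type*}
    [NormedAddCommGroup X] [NormedSpace ℝ X] [CompleteSpace X]
    [NormedAddCommGroup Y] [NormedSpace ℝ Y] [CompleteSpace Y] {T : X →L[ℝ] Y}
    (hT : UpperSemiFredholm T) :
    ∃ M : Submodule ℝ X, IsClosed (M : Set X) ∧ FiniteDimensional ℝ (X ⧸ M) ∧
      IsClosedEmbedding (T ∘L M.subtypeL) := by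
  obtain ⟨_, hrange⟩ := hT
  obtain ⟨M, hM⟩ := (Submodule.ClosedComplemented.of_finiteDimensional
    (LinearMap.ker (T : X →ₗ[ℝ] Y))).exists_isTopCompl
  have hMc : IsClosed (M : Set X) := hM.isClosed'
  have := hMc.completeSpace_coe
  refine ⟨M, hMc, (M.quotientEquivOfIsCompl _ hM.isCompl.symm).symm.finiteDimensional,
    (T ∘L M.subtypeL).isClosedEmbedding_of_injective_of_isClosed_range ?_ ?_⟩
  · intro a b hab
    have hsub : (a - b : X) ∈ LinearMap.ker (T : X →ₗ[ℝ] Y) := by simpa [sub_eq_zero] using hab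
    exact Subtype.ext <| sub_eq_zero.1 <|
      Submodule.disjoint_def.1 hM.isCompl.disjoint _ hsub (M.sub_mem a.2 b.2)
  · convert hrange using 1
    ext y
    refine ⟨fun ⟨m, hm⟩ ↦ ⟨m, hm⟩, ?_⟩
    rintro ⟨x, rfl⟩
    obtain ⟨n, hn, m, hm, rfl⟩ :=
      Submodule.mem_sup.1 (hM.isCompl.sup_eq_top ▸ Submodule.mem_top (x := x))
    exact ⟨⟨m, hm⟩, by simpa using hn⟩

theorem subprojective_of_upperSemiFredholm_nonempty
    {X Y : Type*} [NormedAddCommGroup X] [NormedSpace ℝ X] [CompleteSpace X]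
    [NormedAddCommGroup Y] [NormedSpace ℝ Y] [CompleteSpace Y]
    (hne : ∃ T : X →L[ℝ] Y, UpperSemiFredholm T) (hY : Subprojective Y) :
    Subprojective X := by
  obtain ⟨T, hT⟩ := hne
  obtain ⟨M, hMc, _, hTM⟩ := hT.exists_isClosedEmbedding_comp_subtypeL
  exact .of_finiteDimensional_quotient hMc (hY.of_isClosedEmbedding _ hTM)
end

section
/- Let X and Y be Banach spaces. If the set Φ₋(X,Y) of lower semi-Fredholm operators from X to Y is nonempty and X is superprojective, then Y is superprojective. -/
open Function

/-!
Let `T : X → Y` have closed range `R` of finite codimension and let `Z ⊆ Y` be closed of infinite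
codimension. Then `T⁻¹(Z)` is closed of infinite codimension, so it lies in a closed complemented
`W₁` of infinite codimension. Since `ker T ⊆ W₁`, the open mapping theorem makes `T(W₁)` and the
image of a complement of `W₁` closed complements in `R`, so `T(W₁)` is complemented in `R` and
hence in `Y`. As `Z ∩ R ⊆ T(W₁)` and `Z / (Z ∩ R)` is finite-dimensional, `W = T(W₁) + Z` is
`T(W₁)` plus a finite-dimensional subspace, hence closed and complemented, and `T⁻¹(W) = W₁`
forces `W` to have infinite codimension.
-/

namespace Submodule

theorem CoFG.comap {R M N : Type*} [Ring R] [IsNoetherianRing R] [AddCommGroup M] [Module R M]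
    [AddCommGroup N] [Module R N] {p : Submodule R N} (hp : p.CoFG) (f : M →ₗ[R] N) :
    (p.comap f).CoFG := by
  simpa [LinearMap.ker_comp] using CoFG.ker (p.mkQ ∘ₗ f)

section

variable {K V W : Type*} [DivisionRing K] [AddCommGroup V] [Module K V] [AddCommGroup W]
  [Module K W]

theorem CoFG.of_comap {f : V →ₗ[K] W} (hf : (LinearMap.range f).CoFG) {p : Submodule K W}
    (hp : (p.comap f).CoFG) : p.CoFG := by
  obtain ⟨G, hG⟩ := (p.comap f).exists_isCompl
  obtain ⟨H, hH⟩ := (LinearMap.range f).exists_isCompl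
  refine FG.cofg_of_codisjoint (S := G.map f ⊔ H) ?_ (((hp.fg_of_isCompl hG).map f).sup
    (hf.fg_of_isCompl hH))
  have hrange : LinearMap.range f ≤ G.map f ⊔ p := by
    rw [LinearMap.range_eq_map, ← hG.sup_eq_top, map_sup]
    exact sup_le (le_sup_of_le_right (map_comap_le f p)) le_sup_left
  rw [codisjoint_iff, eq_top_iff, ← hH.sup_eq_top]
  exact sup_le (hrange.trans (sup_le_sup_right le_sup_left _)) (le_sup_of_le_left le_sup_right)

theorem exists_finiteDimensional_inf_sup_eq {R : Submodule K W} (hR : R.CoFG)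
    (Z : Submodule K W) : ∃ F ≤ Z, FiniteDimensional K F ∧ Z ⊓ R ⊔ F = Z := by
  obtain ⟨F, hF⟩ := (R.comap Z.subtype).exists_isCompl
  refine ⟨F.map Z.subtype, map_subtype_le Z F, ?_, ?_⟩
  · have := ((hR.comap Z.subtype).fg_of_isCompl hF).map Z.subtype
    exact Module.Finite.iff_fg.mpr this
  · rw [← map_comap_subtype, ← map_sup, hF.sup_eq_top, map_top, range_subtype]

end

theorem ClosedComplemented.map_subtype {R M : Type*} [Ring R] [TopologicalSpace M]
    [AddCommGroup M] [Module R M] {N : Submodule R M} (hN : N.ClosedComplemented)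
    {p : Submodule R N} (hp : p.ClosedComplemented) : (p.map N.subtype).ClosedComplemented := by
  obtain ⟨P, hP⟩ := hN
  obtain ⟨Q, hQ⟩ := hp
  refine ⟨((N.subtypeL ∘L p.subtypeL ∘L Q ∘L P).codRestrict _ fun x ↦
    mem_map_of_mem (Q (P x)).2), ?_⟩
  rintro ⟨_, x, hx, rfl⟩
  ext
  change ((Q (P x) : N) : M) = x
  rw [hP, hQ ⟨x, hx⟩]

section

variable {𝕜 E F : Type*} [NontriviallyNormedField 𝕜] [NormedAddCommGroup E] [NormedSpace 𝕜 E]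
  [CompleteSpace E] [NormedAddCommGroup F] [NormedSpace 𝕜 F] [CompleteSpace F]

theorem ClosedComplemented.map_of_surjective {p : Submodule 𝕜 E} (hp : p.ClosedComplemented)
    {T : E →L[𝕜] F} (hT : Surjective T) (hker : (T : E →ₗ[𝕜] F).ker ≤ p) :
    (p.map (T : E →ₗ[𝕜] F)).ClosedComplemented := by
  obtain ⟨q, hpq⟩ := hp.exists_isTopCompl
  have hquot := T.isQuotientMap hT
  set P := p.projectionL q hpq
  have hsup : q ⊔ (T : E →ₗ[𝕜] F).ker = (T : E →ₗ[𝕜] F).ker.comap (P : E →ₗ[𝕜] E) := by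
    refine le_antisymm (sup_le (fun y hy ↦ ?_) (fun n hn ↦ ?_)) (fun x hx ↦ ?_)
    · rw [mem_comap, ContinuousLinearMap.coe_coe, (projectionL_apply_eq_zero_iff hpq).mpr hy]
      exact zero_mem _
    · rw [mem_comap, ContinuousLinearMap.coe_coe, projectionL_apply_left hpq ⟨n, hker hn⟩]
      exact hn
    · rw [← projectionL_add_projectionL_eq_self hpq x, add_comm]
      exact add_mem_sup (projectionL_apply_mem _ _) hx
  refine ClosedComplemented.of_isCompl_isClosed (q := q.map (T : E →ₗ[𝕜] F))
    ⟨disjoint_map_of_ker_le_left hpq.isCompl.disjoint hker,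
      codisjoint_map hT hpq.isCompl.codisjoint⟩ ?_ ?_
  · rw [← hquot.isClosed_preimage]
    change IsClosed ((p.map (T : E →ₗ[𝕜] F)).comap (T : E →ₗ[𝕜] F) : Set E)
    rw [comap_map_eq, sup_of_le_left hker]
    exact hpq.isClosed
  · rw [← hquot.isClosed_preimage]
    change IsClosed ((q.map (T : E →ₗ[𝕜] F)).comap (T : E →ₗ[𝕜] F) : Set E)
    rw [comap_map_eq, hsup]
    exact T.isClosed_ker.preimage P.continuous

theorem ClosedComplemented.map_of_ker_le {p : Submodule 𝕜 E} (hp : p.ClosedComplemented)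
    {T : E →L[𝕜] F} (hR : (T : E →ₗ[𝕜] F).range.ClosedComplemented)
    (hker : (T : E →ₗ[𝕜] F).ker ≤ p) : (p.map (T : E →ₗ[𝕜] F)).ClosedComplemented := by
  set R := (T : E →ₗ[𝕜] F).range
  have : CompleteSpace R := hR.isClosed.completeSpace_coe
  set T' := T.codRestrict R (LinearMap.mem_range_self _)
  have hT' : Surjective T' := fun ⟨_, x, rfl⟩ ↦ ⟨x, rfl⟩
  have h := hR.map_subtype (hp.map_of_surjective hT' (by rwa [ContinuousLinearMap.ker_codRestrict]))
  rwa [← map_comp] at h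

end

theorem ClosedComplemented.sup_finiteDimensional {𝕜 E : Type*} [RCLike 𝕜] [NormedAddCommGroup E]
    [NormedSpace 𝕜 E] {M : Submodule 𝕜 E} (hM : M.ClosedComplemented) (N : Submodule 𝕜 E)
    [FiniteDimensional 𝕜 N] : (M ⊔ N).ClosedComplemented := by
  -- `M ⊔ N = M ⊔ D` with `D ⊆ q` finite-dimensional; `P + π ∘ Q` projects onto it.
  obtain ⟨q, hMq⟩ := hM.exists_isTopCompl
  set P := M.projectionL q hMq
  set Q := q.projectionL M hMq.symm
  set D := N.map (Q : E →ₗ[𝕜] E)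
  obtain ⟨π, hπ⟩ := ClosedComplemented.of_finiteDimensional D
  have hD : D ≤ M ⊔ N := by
    rintro _ ⟨y, hy, rfl⟩
    rw [ContinuousLinearMap.coe_coe, projectionL_eq_self_sub_projectionL hMq]
    exact sub_mem (mem_sup_right hy) (mem_sup_left (projectionL_apply_mem _ _))
  refine ⟨(P + D.subtypeL ∘L π ∘L Q).codRestrict _ fun x ↦
    add_mem (mem_sup_left (projectionL_apply_mem _ _)) (hD (π (Q x)).2), ?_⟩
  rintro ⟨w, hw⟩
  obtain ⟨m, hm, y, hy, rfl⟩ := mem_sup.mp hw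
  have hQ : Q (m + y) = Q y := by
    rw [map_add, (projectionL_apply_eq_zero_iff hMq.symm).mpr hm, zero_add]
  have hπQ : (π (Q (m + y)) : E) = Q (m + y) := by
    rw [hQ]; exact congrArg Subtype.val (hπ ⟨Q y, mem_map_of_mem hy⟩)
  ext
  change P (m + y) + (π (Q (m + y)) : E) = m + y
  rw [hπQ, projectionL_add_projectionL_eq_self]

end Submodule

open Submodule in
theorem superprojective_of_lowerSemiFredholm_nonempty
    {X Y : Type*} [NormedAddCommGroup X] [NormedSpace ℝ X] [CompleteSpace X]
    [NormedAddCommGroup Y] [NormedSpace ℝ Y] [CompleteSpace Y]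
    (hne : ∃ T : X →L[ℝ] Y, LowerSemiFredholm T) (hX : Superprojective X) :
    Superprojective Y := by
  obtain ⟨T, hTc, hTf⟩ := hne
  intro Z hZc hZ
  obtain ⟨W₁, hZW₁, -, hW₁, hW₁c⟩ := hX (Z.comap (T : X →ₗ[ℝ] Y)) (hZc.preimage T.continuous)
    fun h ↦ hZ (CoFG.of_comap hTf h)
  have hker : (T : X →ₗ[ℝ] Y).ker ≤ W₁ := (comap_mono bot_le).trans hZW₁
  set M := W₁.map (T : X →ₗ[ℝ] Y)
  have hM : M.ClosedComplemented :=
    hW₁c.map_of_ker_le (ClosedComplemented.of_finiteDimensional_quotient hTc) hker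
  obtain ⟨F, hFZ, hF, hZF⟩ := exists_finiteDimensional_inf_sup_eq hTf Z
  have hZM : Z ≤ M ⊔ F := by
    rw [← hZF, inf_comm, ← map_comap_eq]
    exact sup_le_sup_right (map_mono hZW₁) F
  have hW := hM.sup_finiteDimensional F
  refine ⟨M ⊔ F, hZM, hW.isClosed, fun h ↦ hW₁ ?_, hW⟩
  rw [← comap_map_sup_of_comap_le ((comap_mono hFZ).trans hZW₁)]
  exact CoFG.comap h _
end

section
/- Every quotient of a superprojective Banach space by a closed subspace is itself superprojective. -/
open Function

/-!
Pull a closed infinite-codimensional subspace `Z` of `X ⧸ N` back to `X`, enlarge it there to a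
complemented subspace `W`, and push `W` forward again. Since `N ≤ W`, the correspondence between
subspaces of `X ⧸ N` and subspaces of `X` containing `N` preserves closedness, the codimension
(third isomorphism theorem), and complementedness: a continuous projection onto `W` fixes `N`,
so it descends to the quotient.
-/

namespace Submodule

variable {R M : Type*} [Ring R] [AddCommGroup M] [Module R M] {S W : Submodule R M}

theorem finite_quotient_map_mkQ_iff (h : S ≤ W) :
    Module.Finite R ((M ⧸ S) ⧸ W.map S.mkQ) ↔ Module.Finite R (M ⧸ W) :=
  Module.Finite.equiv_iff (quotientQuotientEquivQuotient S W h)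

variable [TopologicalSpace M]

theorem isClosed_map_mkQ_iff (h : S ≤ W) :
    IsClosed (W.map S.mkQ : Set (M ⧸ S)) ↔ IsClosed (W : Set M) := by
  rw [← S.isQuotientMap_mkQL.isClosed_preimage, coe_mkQL, ← comap_coe, comap_map_mkQ,
    sup_eq_right.2 h]

theorem ClosedComplemented.map_mkQ (hW : W.ClosedComplemented) (h : S ≤ W) :
    (W.map S.mkQ).ClosedComplemented := by
  obtain ⟨f, hf⟩ := hW
  have hf' : ∀ w ∈ W, (f w : M) = w := fun w hw => congrArg Subtype.val (hf ⟨w, hw⟩)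
  set g : M →L[R] M ⧸ S := S.mkQL ∘L W.subtypeL ∘L f
  have hg : S ≤ g.ker := fun x hx => by
    simp [g, hf' x (h hx), (Quotient.mk_eq_zero S).2 hx]
  refine ⟨(S.liftQL g hg).codRestrict _ ?_, ?_⟩
  · intro y
    obtain ⟨x, rfl⟩ := S.mkQ_surjective y
    exact mem_map_of_mem (f x).2
  · rintro ⟨_, w, hw, rfl⟩
    ext
    simp [g, hf' w hw]

end Submodule

theorem superprojective_quotient_general
    {X : Type*} [NormedAddCommGroup X] [NormedSpace ℝ X]
    (hX : Superprojective X) (N : Submodule ℝ X) :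
    Superprojective (X ⧸ N) := by
  intro Z hZ hZcodim
  have hZ' : Z = (Z.comap N.mkQ).map N.mkQ :=
    (Submodule.map_comap_eq_of_surjective N.mkQ_surjective Z).symm
  have hNZ : N ≤ Z.comap N.mkQ := N.ker_mkQ.ge.trans (LinearMap.ker_le_comap _)
  obtain ⟨W, hZW, hW, hWcodim, hWc⟩ := hX (Z.comap N.mkQ) (hZ.preimage N.mkQL.continuous)
    (mt (Submodule.finite_quotient_map_mkQ_iff hNZ).2 (hZ' ▸ hZcodim))
  have hNW := hNZ.trans hZW
  exact ⟨W.map N.mkQ, hZ'.trans_le (Submodule.map_mono hZW),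
    (Submodule.isClosed_map_mkQ_iff hNW).2 hW,
    mt (Submodule.finite_quotient_map_mkQ_iff hNW).1 hWcodim, hWc.map_mkQ hNW⟩

theorem superprojective_quotient
    {X : Type*} [NormedAddCommGroup X] [NormedSpace ℝ X] [CompleteSpace X]
    (hX : Superprojective X) (N : Submodule ℝ X) (hN : IsClosed (N : Set X)) :
    Superprojective (X ⧸ N) :=
  superprojective_quotient_general hX N
end

section
/- Let X and Y be Banach spaces. Every strictly singular operator K : X → Y belongs to the perturbation class PΦ₊(X,Y); that is, if T : X → Y is upper semi-Fredholm and K is strictly singular, then T + K is upper semi-Fredholm. -/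
open Function

/-! If `T + K` is not upper semi-Fredholm, it is bounded below on no closed finite-codimensional
subspace. So inside the closed finite-codimensional subspace `M` on which `T` is bounded below
by `c`, one can pick unit vectors `uₙ` with `‖(T + K) uₙ‖ ≤ ε 4⁻ⁿ`, each lying in the kernels of
norming functionals of the previous ones. The coefficients of `z = ∑ aᵢ uᵢ` then satisfy
`|aₙ| ≤ 2ⁿ ‖z‖`, so `T + K` has norm at most `2ε` on the closed span `U` of the `uₙ`, and `K` is
bounded below by `c - 2ε` on the infinite-dimensional space `U`. -/

open Finset Submodule
open LinearMap (ker)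

section

variable {X Y : Type*} [NormedAddCommGroup X] [NormedSpace ℝ X]
  [NormedAddCommGroup Y] [NormedSpace ℝ Y]

def IsBoundedBelowOn (T : X →L[ℝ] Y) (U : Submodule ℝ X) : Prop :=
  ∃ c : ℝ, 0 < c ∧ ∀ u ∈ U, c * ‖u‖ ≤ ‖T u‖

theorem range_comp_subtypeL (T : X →L[ℝ] Y) (U : Submodule ℝ X) :
    Set.range (T ∘L U.subtypeL) = U.map (T : X →ₗ[ℝ] Y) := by
  ext; simp

theorem isBoundedBelowOn_iff_exists_antilipschitzWith {T : X →L[ℝ] Y} {U : Submodule ℝ X} :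
    IsBoundedBelowOn T U ↔ ∃ K, AntilipschitzWith K (T ∘L U.subtypeL) := by
  rw [antilipschitzWith_iff_exists_mul_le_norm]
  simp [IsBoundedBelowOn]

theorem IsBoundedBelowOn.disjoint_ker {T : X →L[ℝ] Y} {U : Submodule ℝ X}
    (hT : IsBoundedBelowOn T U) : Disjoint (ker (T : X →ₗ[ℝ] Y)) U := by
  obtain ⟨c, hc, hTU⟩ := hT
  refine disjoint_def.2 fun x hxT hxU => norm_le_zero_iff.1 ?_
  have := hTU x hxU
  rw [show T x = 0 from hxT, norm_zero] at this
  exact nonpos_of_mul_nonpos_right this hc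

theorem exists_norm_eq_one_of_not_isBoundedBelowOn {S : X →L[ℝ] Y} {N : Submodule ℝ X}
    (hS : ¬ IsBoundedBelowOn S N) {δ : ℝ} (hδ : 0 < δ) :
    ∃ x ∈ N, ‖x‖ = 1 ∧ ‖S x‖ ≤ δ := by
  simp only [IsBoundedBelowOn, not_exists, not_and, not_forall, not_le] at hS
  obtain ⟨x, hxN, hx⟩ := hS δ hδ
  have hx0 : x ≠ 0 := by rintro rfl; simp at hx
  refine ⟨‖x‖⁻¹ • x, N.smul_mem _ hxN, norm_smul_inv_norm hx0, ?_⟩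
  rw [map_smul, norm_smul, norm_inv, norm_norm, inv_mul_le_iff₀ (norm_pos_iff.2 hx0)]
  linarith

theorem UpperSemiFredholm.exists_isBoundedBelowOn [CompleteSpace X] [CompleteSpace Y]
    {T : X →L[ℝ] Y} (hT : UpperSemiFredholm T) :
    ∃ M : Submodule ℝ X, IsClosed (M : Set X) ∧ M.CoFG ∧ IsBoundedBelowOn T M := by
  obtain ⟨hker, hrange⟩ := hT
  obtain ⟨M, hMc, hcompl⟩ :=
    (ClosedComplemented.of_finiteDimensional (ker (T : X →ₗ[ℝ] Y))).exists_isClosed_isCompl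
  have : CompleteSpace M := hMc.completeSpace_coe
  refine ⟨M, hMc, FG.cofg_of_isCompl hcompl (Module.Finite.iff_fg.1 hker),
    isBoundedBelowOn_iff_exists_antilipschitzWith.2 ?_⟩
  refine (T ∘L M.subtypeL).antilipschitz_of_injective_of_isClosed_range ?_ ?_
  · rw [injective_iff_map_eq_zero]
    rintro ⟨x, hxM⟩ hx
    exact Subtype.ext (disjoint_def.1 hcompl.disjoint x hx hxM)
  · rw [range_comp_subtypeL, map_eq_range_iff.2 hcompl.symm.codisjoint]
    exact hrange

theorem upperSemiFredholm_of_isBoundedBelowOn [CompleteSpace X] {S : X →L[ℝ] Y}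
    {N : Submodule ℝ X} (hNc : IsClosed (N : Set X)) (hN : N.CoFG) (hS : IsBoundedBelowOn S N) :
    UpperSemiFredholm S := by
  refine ⟨.of_fg (hN.fg_of_disjoint hS.disjoint_ker), ?_⟩
  have : CompleteSpace N := hNc.completeSpace_coe
  obtain ⟨K, hK⟩ := isBoundedBelowOn_iff_exists_antilipschitzWith.1 hS
  refine LinearMap.isClosed_range_of_isClosed_map_of_finiteDimensional_quotient (s := N) ?_
  rw [← range_comp_subtypeL]
  exact hK.isClosed_range (S ∘L N.subtypeL).uniformContinuous

structure IsTriangularSystem (u : ℕ → X) (f : ℕ → StrongDual ℝ X) : Prop where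
  norm_eq_one : ∀ n, ‖u n‖ = 1
  norm_le_one : ∀ n, ‖f n‖ ≤ 1
  apply_self : ∀ n, f n (u n) = 1
  apply_of_lt : ∀ i j, i < j → f i (u j) = 0

namespace IsTriangularSystem

variable {u : ℕ → X} {f : ℕ → StrongDual ℝ X}

theorem abs_apply_le (h : IsTriangularSystem u f) (l : ℕ →₀ ℝ) (n : ℕ) :
    |l n| ≤ 2 ^ n * ‖Finsupp.linearCombination ℝ u l‖ := by
  set z := Finsupp.linearCombination ℝ u l
  induction n using Nat.strong_induction_on with
  | _ n ih =>
  have hfz : f n z = ∑ i ∈ range n, l i * f n (u i) + l n := by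
    have hsupp : f n z = ∑ i ∈ l.support ∪ range (n + 1), l i * f n (u i) := by
      simp only [z, Finsupp.linearCombination_apply, map_finsuppSum, map_smul, smul_eq_mul]
      exact Finsupp.sum_of_support_subset l subset_union_left _ fun i _ => zero_mul _
    rw [hsupp, ← sum_subset subset_union_right fun i _ hi => by
      rw [h.apply_of_lt n i (by simpa using hi), mul_zero], sum_range_succ, h.apply_self, mul_one]
  have hf : ∀ y, |f n y| ≤ ‖y‖ := fun y => by
    simpa using (f n).le_of_opNorm_le (h.norm_le_one n) y
  have hgeom : ∑ i ∈ range n, (2 : ℝ) ^ i = 2 ^ n - 1 := by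
    rw [geom_sum_eq (by norm_num)]; norm_num
  calc |l n| = |f n z - ∑ i ∈ range n, l i * f n (u i)| := by rw [hfz, add_sub_cancel_left]
    _ ≤ ‖z‖ + ∑ i ∈ range n, |l i| := by
      refine (abs_sub _ _).trans (add_le_add (hf z) ((abs_sum_le_sum_abs _ _).trans ?_))
      refine sum_le_sum fun i _ => ?_
      simpa [abs_mul, h.norm_eq_one] using mul_le_mul_of_nonneg_left (hf (u i)) (abs_nonneg (l i))
    _ ≤ ‖z‖ + ∑ i ∈ range n, 2 ^ i * ‖z‖ := by
      gcongr with i hi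
      exact ih i (mem_range.1 hi)
    _ = 2 ^ n * ‖z‖ := by rw [← sum_mul, hgeom]; ring

theorem linearIndependent (h : IsTriangularSystem u f) : LinearIndependent ℝ u :=
  linearIndependent_iff.2 fun l hl => Finsupp.ext fun n =>
    abs_nonpos_iff.1 (by simpa [hl] using h.abs_apply_le l n)

theorem norm_apply_linearCombination_le (h : IsTriangularSystem u f) (S : X →L[ℝ] Y) {ε : ℝ}
    (hS : ∀ n, ‖S (u n)‖ ≤ ε * (1 / 4) ^ n) (l : ℕ →₀ ℝ) :
    ‖S (Finsupp.linearCombination ℝ u l)‖ ≤ 2 * ε * ‖Finsupp.linearCombination ℝ u l‖ := by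
  set z := Finsupp.linearCombination ℝ u l
  have hε : 0 ≤ ε := by simpa using (norm_nonneg _).trans (hS 0)
  obtain ⟨N, hN⟩ := exists_nat_subset_range l.support
  have hSz : S z = ∑ i ∈ l.support, l i • S (u i) := by
    simp only [z, Finsupp.linearCombination_apply, Finsupp.sum, map_sum, map_smul]
  calc ‖S z‖ ≤ ∑ i ∈ l.support, |l i| * ‖S (u i)‖ := by
        rw [hSz]; exact (norm_sum_le _ _).trans (by simp [norm_smul])
    _ ≤ ∑ i ∈ l.support, (2 ^ i * ‖z‖) * (ε * (1 / 4) ^ i) := by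
        gcongr with i
        exacts [h.abs_apply_le l i, hS i]
    _ = ε * ‖z‖ * ∑ i ∈ l.support, (1 / 2 : ℝ) ^ i := by
        rw [mul_sum]; refine sum_congr rfl fun i _ => ?_
        rw [show (1 / 2 : ℝ) ^ i = 2 ^ i * (1 / 4) ^ i by rw [← mul_pow]; norm_num]; ring
    _ ≤ ε * ‖z‖ * ∑ i ∈ range N, (1 / 2 : ℝ) ^ i := by
        gcongr
    _ ≤ ε * ‖z‖ * 2 := by gcongr; exact sum_geometric_two_le N
    _ = 2 * ε * ‖z‖ := by ring

end IsTriangularSystem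

theorem exists_isTriangularSystem {M : Submodule ℝ X} (hMc : IsClosed (M : Set X)) (hM : M.CoFG)
    (P : ℕ → X → Prop)
    (hP : ∀ n (N : Submodule ℝ X), IsClosed (N : Set X) → N.CoFG → ∃ x ∈ N, ‖x‖ = 1 ∧ P n x) :
    ∃ u f, IsTriangularSystem u f ∧ (∀ n, u n ∈ M) ∧ ∀ n, P n (u n) := by
  let 𝒩 := {N : Submodule ℝ X // IsClosed (N : Set X) ∧ N.CoFG}
  choose x hxN hx1 hxP using fun n (N : 𝒩) => hP n N.1 N.2.1 N.2.2
  choose g hg1 hgx using fun v : X => exists_dual_vector'' ℝ v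
  let cut (N : 𝒩) (φ : StrongDual ℝ X) : 𝒩 :=
    ⟨N.1 ⊓ ker (φ : X →ₗ[ℝ] ℝ), N.2.1.inter φ.isClosed_ker, N.2.2.inf (CoFG.ker _)⟩
  let Ns (n : ℕ) : 𝒩 := Nat.rec ⟨M, hMc, hM⟩ (fun n N => cut N (g (x n N))) n
  have hanti : Antitone fun n => (Ns n).1 := antitone_nat_of_succ_le fun n => inf_le_left
  refine ⟨fun n => x n (Ns n), fun n => g (x n (Ns n)),
    ⟨fun n => hx1 _ _, fun n => hg1 _, fun n => by simp [hgx, hx1], fun i j hij => ?_⟩,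
    fun n => hanti (Nat.zero_le n) (hxN _ _), fun n => hxP _ _⟩
  exact (hanti (Nat.succ_le_of_lt hij) (hxN j (Ns j))).2

theorem exists_infiniteDimensional_le_of_not_upperSemiFredholm [CompleteSpace X]
    {S : X →L[ℝ] Y} (hS : ¬ UpperSemiFredholm S) {M : Submodule ℝ X}
    (hMc : IsClosed (M : Set X)) (hM : M.CoFG) {ε : ℝ} (hε : 0 < ε) :
    ∃ U : Submodule ℝ X, U ≤ M ∧ IsClosed (U : Set X) ∧ ¬ FiniteDimensional ℝ U ∧
      ∀ z ∈ U, ‖S z‖ ≤ ε * ‖z‖ := by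
  obtain ⟨u, f, hu, huM, huS⟩ := exists_isTriangularSystem hMc hM
    (fun n x => ‖S x‖ ≤ ε / 2 * (1 / 4) ^ n) fun n N hNc hN =>
      exists_norm_eq_one_of_not_isBoundedBelowOn
        (fun hSN => hS (upperSemiFredholm_of_isBoundedBelowOn hNc hN hSN)) (by positivity)
  set U₀ := span ℝ (Set.range u)
  have hU₀ : U₀ ≤ M := span_le.2 (Set.range_subset_iff.2 huM)
  have hSU₀ : ∀ z ∈ U₀, ‖S z‖ ≤ ε * ‖z‖ := by
    intro z hz
    obtain ⟨l, rfl⟩ : z ∈ LinearMap.range (Finsupp.linearCombination ℝ u) := by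
      rwa [Finsupp.range_linearCombination]
    simpa [mul_div_cancel₀] using hu.norm_apply_linearCombination_le S huS l
  refine ⟨U₀.topologicalClosure, U₀.topologicalClosure_minimal hU₀ hMc,
    U₀.isClosed_topologicalClosure, fun hfin => ?_, fun z hz => ?_⟩
  · have := finiteDimensional_of_le U₀.le_topologicalClosure
    exact Module.Finite.not_linearIndependent_of_infinite _
      (linearIndependent_span hu.linearIndependent)
  · have hclosed : IsClosed {z : X | ‖S z‖ ≤ ε * ‖z‖} := isClosed_le (by fun_prop) (by fun_prop)
    rw [← SetLike.mem_coe, topologicalClosure_coe] at hz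
    exact closure_minimal hSU₀ hclosed hz

end

theorem strictlySingular_mem_pertUpperSemiFredholm
    {X Y : Type*} [NormedAddCommGroup X] [NormedSpace ℝ X] [CompleteSpace X]
    [NormedAddCommGroup Y] [NormedSpace ℝ Y] [CompleteSpace Y]
    (K : X →L[ℝ] Y) (hK : StrictlySingular K) :
    PertUpperSemiFredholm K := by
  intro T hT
  by_contra hTK
  obtain ⟨M, hMc, hM, c, hc, hTM⟩ := hT.exists_isBoundedBelowOn
  obtain ⟨U, hUM, hUc, hU, hTKU⟩ :=
    exists_infiniteDimensional_le_of_not_upperSemiFredholm hTK hMc hM (half_pos hc)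
  refine hK ⟨U, hUc, hU, c / 2, half_pos hc, fun z hz => ?_⟩
  have hTz : ‖T z‖ ≤ ‖(T + K) z‖ + ‖K z‖ := by
    simpa using norm_sub_le ((T + K) z) (K z)
  linarith [hTM z (hUM hz), hTKU z hz]
end

section
/- Let K : X → Y be a bounded operator between Banach spaces, let U be a closed infinite-dimensional subspace of X such that the restriction of K to U is an isomorphism onto its image, and let L be a closed subspace of Y such that K(U) ∩ L is finite-dimensional and K(U) + L is not closed. Then there exists a compact operator K₁ : X → Y such that (K + K₁)(U) ∩ L is infinite-dimensional. -/
open Function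

/-!
Cutting `U` down to `U ∩ ker P` for a finite-rank projection `P` with range in `U` changes
`K(U) + L` only by a finite-dimensional subspace, so the sum stays non-closed. Since an operator
that is bounded below modulo `L` has closed range plus `L`, there are unit vectors `u ∈ U ∩ ker P`
with `K u` arbitrarily close to some `z ∈ L`. Choosing such `u₀, u₁, …` inductively together with
biorthogonal functionals `fₙ` yields a norm-convergent series `K₁ = ∑ fₙ ⊗ (zₙ - K uₙ)` of rank-one
operators, so `K₁` is compact, and `(K + K₁) uₙ = zₙ ∈ L`. Keeping `‖K₁‖` below the lower bound of
`K` on `U`, the operator `K + K₁` is injective on `U` and maps each `span {u₀, …, uₙ₋₁}`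
isomorphically into `(K + K₁)(U) ∩ L`.
-/

section

variable {W X Y : Type*} [NormedAddCommGroup W] [NormedSpace ℝ W]
  [NormedAddCommGroup X] [NormedSpace ℝ X] [NormedAddCommGroup Y] [NormedSpace ℝ Y]

theorem isCompactOperator_smulRight (f : StrongDual ℝ X) (v : Y) :
    IsCompactOperator (f.smulRight v) := by
  have hv : IsCompactOperator (ContinuousLinearMap.toSpanSingleton ℝ v ∘ id) :=
    (isCompactOperator_id_iff_finiteDimensional (𝕜 := ℝ).2 inferInstance).clm_comp _
  have hf : ⇑(f.smulRight v) = (ContinuousLinearMap.toSpanSingleton ℝ v ∘ id) ∘ f := by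
    ext; simp
  exact hf ▸ hv.comp_clm f

theorem Submodule.finrank_sup_span_singleton_of_notMem {𝕜 V : Type*} [DivisionRing 𝕜]
    [AddCommGroup V] [Module 𝕜 V] {p : Submodule 𝕜 V} [FiniteDimensional 𝕜 p] {v : V}
    (hv : v ∉ p) : Module.finrank 𝕜 (p ⊔ span 𝕜 {v} : Submodule 𝕜 V) = Module.finrank 𝕜 p + 1 := by
  have hv0 : v ≠ 0 := fun h => hv (h ▸ p.zero_mem)
  have := Submodule.finrank_sup_add_finrank_inf_eq p (span 𝕜 {v})
  rwa [(Submodule.disjoint_span_singleton_of_notMem hv).eq_bot, finrank_bot, add_zero,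
    finrank_span_singleton hv0] at this

namespace IsIdempotentElem

variable {P : X →L[ℝ] X} {f : StrongDual ℝ X} {u : X}

theorem apply_apply (hP : IsIdempotentElem P) (x : X) : P (P x) = P x := DFunLike.congr_fun hP x

theorem apply_of_mem_range (hP : IsIdempotentElem P) {x : X}
    (hx : x ∈ LinearMap.range (P : X →ₗ[ℝ] X)) : P x = x := by
  obtain ⟨y, rfl⟩ := hx
  exact hP.apply_apply y

theorem notMem_range_of_apply_eq_zero (hP : IsIdempotentElem P) (hPu : P u = 0) (hu : u ≠ 0) :
    u ∉ LinearMap.range (P : X →ₗ[ℝ] X) := fun h => hu (by rw [← hP.apply_of_mem_range h, hPu])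

theorem add_smulRight (hP : IsIdempotentElem P) (hfP : f ∘L P = 0) (hPu : P u = 0)
    (hfu : f u = 1) : IsIdempotentElem (P + f.smulRight u) := by
  ext x
  have hfPx : f (P x) = 0 := DFunLike.congr_fun hfP x
  simp [hP.apply_apply, hfPx, hPu, hfu]

theorem range_add_smulRight (hP : IsIdempotentElem P) (hfP : f ∘L P = 0) (hPu : P u = 0)
    (hfu : f u = 1) :
    LinearMap.range ((P + f.smulRight u : X →L[ℝ] X) : X →ₗ[ℝ] X) =
      LinearMap.range (P : X →ₗ[ℝ] X) ⊔ Submodule.span ℝ {u} := by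
  apply le_antisymm
  · rintro _ ⟨x, rfl⟩
    exact Submodule.add_mem_sup ⟨x, rfl⟩
      (Submodule.smul_mem _ _ (Submodule.mem_span_singleton_self u))
  · refine sup_le ?_ ((Submodule.span_singleton_le_iff_mem _ _).2 ⟨u, by simp [hPu, hfu]⟩)
    rintro _ ⟨x, rfl⟩
    have hfPx : f (P x) = 0 := DFunLike.congr_fun hfP x
    exact ⟨P x, by simp [hP.apply_apply, hfPx]⟩

end IsIdempotentElem

theorem injOn_add_of_norm_lt {K K₁ : X →L[ℝ] Y} {U : Submodule ℝ X} {c : ℝ}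
    (hK : ∀ u ∈ U, c * ‖u‖ ≤ ‖K u‖) (hK₁ : ‖K₁‖ < c) : Set.InjOn (K + K₁) U := by
  intro x hx y hy hxy
  by_contra hne
  have hpos : 0 < ‖x - y‖ := norm_pos_iff.2 (sub_ne_zero.2 hne)
  have h0 : K (x - y) = -K₁ (x - y) := by
    rw [← add_eq_zero_iff_eq_neg, ← add_apply, map_sub, hxy, sub_self]
  have hlow := hK _ (U.sub_mem hx hy)
  rw [h0, norm_neg] at hlow
  have hup := K₁.le_opNorm (x - y)
  nlinarith

theorem not_finiteDimensional_map_inf {T : X →L[ℝ] Y} {U : Submodule ℝ X} {L : Submodule ℝ Y}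
    (hT : Set.InjOn T U)
    (hE : ∀ n, ∃ E : Submodule ℝ X, E ≤ U ∧ Module.finrank ℝ E = n ∧
      E.map (T : X →ₗ[ℝ] Y) ≤ L) :
    ¬ FiniteDimensional ℝ ↥(U.map (T : X →ₗ[ℝ] Y) ⊓ L) := by
  intro hfd
  obtain ⟨E, hEU, hEn, hEL⟩ := hE (Module.finrank ℝ ↥(U.map (T : X →ₗ[ℝ] Y) ⊓ L) + 1)
  have hinj : Injective ((T : X →ₗ[ℝ] Y) ∘ₗ E.subtype) := fun x y hxy =>
    Subtype.ext (hT (hEU x.2) (hEU y.2) hxy)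
  have hrank : Module.finrank ℝ (E.map (T : X →ₗ[ℝ] Y)) = Module.finrank ℝ E := by
    rw [← LinearMap.finrank_range_of_inj hinj, LinearMap.range_comp, Submodule.range_subtype]
  have := Submodule.finrank_mono (le_inf (Submodule.map_mono hEU) hEL)
  omega

theorem exists_norm_eq_one_norm_mkQ_lt_of_not_isClosed [CompleteSpace W] (T : W →L[ℝ] Y)
    {L : Submodule ℝ Y} (hL : IsClosed (L : Set Y))
    (hT : ¬ IsClosed ((LinearMap.range (T : W →ₗ[ℝ] Y) ⊔ L : Submodule ℝ Y) : Set Y))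
    {δ : ℝ} (hδ : 0 < δ) :
    ∃ x, ‖x‖ = 1 ∧ ‖L.mkQ (T x)‖ < δ := by
  by_contra! h
  have hbound : ∀ x, ‖x‖ ≤ δ⁻¹ * ‖(L.mkQL ∘L T) x‖ := by
    intro x
    rcases eq_or_ne x 0 with rfl | hx
    · simp
    have hx' : 0 < ‖x‖ := norm_pos_iff.2 hx
    have := h (‖x‖⁻¹ • x) (by simp [norm_smul, hx'.ne'])
    rw [map_smul, map_smul, norm_smul, norm_inv, norm_norm, le_inv_mul_iff₀ hx'] at this
    rw [le_inv_mul_iff₀ hδ]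
    simpa [mul_comm] using this
  have hclosed := ((L.mkQL ∘L T).antilipschitz_of_bound (K := ⟨δ⁻¹, by positivity⟩)
    hbound).isClosed_range (L.mkQL ∘L T).uniformContinuous
  apply hT
  rw [sup_comm, ← Submodule.comap_map_mkQ, ← LinearMap.range_comp]
  exact hclosed.preimage L.mkQL.continuous

theorem isClosed_map_sup_of_isClosed_map_inf_ker (K : X →L[ℝ] Y) {U : Submodule ℝ X}
    {L : Submodule ℝ Y} {P : X →L[ℝ] X} (hP : IsIdempotentElem P)
    (hPU : LinearMap.range (P : X →ₗ[ℝ] X) ≤ U)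
    [FiniteDimensional ℝ (LinearMap.range (P : X →ₗ[ℝ] X))]
    (h : IsClosed (((U ⊓ LinearMap.ker (P : X →ₗ[ℝ] X)).map (K : X →ₗ[ℝ] Y) ⊔ L :
      Submodule ℝ Y) : Set Y)) :
    IsClosed ((U.map (K : X →ₗ[ℝ] Y) ⊔ L : Submodule ℝ Y) : Set Y) := by
  have hsplit : U.map (K : X →ₗ[ℝ] Y) ⊔ L = ((U ⊓ LinearMap.ker (P : X →ₗ[ℝ] X)).map
      (K : X →ₗ[ℝ] Y) ⊔ L) ⊔ (LinearMap.range (P : X →ₗ[ℝ] X)).map (K : X →ₗ[ℝ] Y) := by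
    refine le_antisymm ?_ ?_
    · refine sup_le ?_ (le_sup_right.trans le_sup_left)
      rintro _ ⟨u, hu, rfl⟩
      have hker : u - P u ∈ U ⊓ LinearMap.ker (P : X →ₗ[ℝ] X) := by
        refine ⟨U.sub_mem hu (hPU ⟨u, rfl⟩), ?_⟩
        rw [SetLike.mem_coe, LinearMap.mem_ker, map_sub, ContinuousLinearMap.coe_coe,
          hP.apply_apply, sub_self]
      have hKu : K u = K (u - P u) + K (P u) := by rw [← map_add, sub_add_cancel]
      rw [ContinuousLinearMap.coe_coe, hKu]
      exact Submodule.add_mem_sup (Submodule.mem_sup_left ⟨_, hker, rfl⟩) ⟨P u, ⟨u, rfl⟩, rfl⟩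
    · exact sup_le (sup_le_sup_right (Submodule.map_mono inf_le_left) _)
        (le_sup_of_le_left (Submodule.map_mono hPU))
  rw [hsplit]
  exact Submodule.isClosed_sup_finiteDimensional _ _ h

theorem exists_norm_eq_one_norm_sub_lt_of_not_isClosed [CompleteSpace X] (K : X →L[ℝ] Y)
    {U : Submodule ℝ X} {L : Submodule ℝ Y} {P : X →L[ℝ] X} (hP : IsIdempotentElem P)
    (hPU : LinearMap.range (P : X →ₗ[ℝ] X) ≤ U)
    [FiniteDimensional ℝ (LinearMap.range (P : X →ₗ[ℝ] X))]
    (hU : IsClosed (U : Set X)) (hL : IsClosed (L : Set Y))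
    (hnc : ¬ IsClosed ((U.map (K : X →ₗ[ℝ] Y) ⊔ L : Submodule ℝ Y) : Set Y))
    {ε : ℝ} (hε : 0 < ε) :
    ∃ u ∈ U, P u = 0 ∧ ‖u‖ = 1 ∧ ∃ z ∈ L, ‖K u - z‖ < ε := by
  set V := U ⊓ LinearMap.ker (P : X →ₗ[ℝ] X)
  have : CompleteSpace V := (hU.inter P.isClosed_ker).completeSpace_coe
  have hV : ¬ IsClosed ((LinearMap.range ((K ∘L V.subtypeL : V →L[ℝ] Y) : V →ₗ[ℝ] Y) ⊔ L :
      Submodule ℝ Y) : Set Y) := by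
    rw [ContinuousLinearMap.toLinearMap_comp, LinearMap.range_comp,
      Submodule.toLinearMap_subtypeL, Submodule.range_subtype]
    exact fun h => hnc (isClosed_map_sup_of_isClosed_map_inf_ker K hP hPU h)
  obtain ⟨⟨u, huU, hPu⟩, hu1, hKu⟩ := exists_norm_eq_one_norm_mkQ_lt_of_not_isClosed _ hL hV hε
  obtain ⟨m, hm, hmε⟩ := Submodule.Quotient.norm_mk_lt (L.mkQ (K u)) (sub_pos.2 hKu)
  refine ⟨u, huU, hPu, hu1, K u - m, ?_, by simpa using hmε⟩
  rw [← Submodule.Quotient.mk_eq_zero, Submodule.Quotient.mk_sub, ← Submodule.mkQ_apply, hm]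
  simp

variable (K : X →L[ℝ] Y) (U : Submodule ℝ X) (L : Submodule ℝ Y)

/-- The data after `n` steps of the construction: `P = ∑ i < n, fᵢ ⊗ uᵢ` and
`A = ∑ i < n, fᵢ ⊗ (zᵢ - K uᵢ)` for unit vectors `uᵢ ∈ U`, functionals with `fᵢ uⱼ = δᵢⱼ` and
`zᵢ ∈ L`, so that `(K + A) uᵢ = zᵢ`. -/
structure IsCorrectionStage (n : ℕ) (P : X →L[ℝ] X) (A : X →L[ℝ] Y) : Prop where
  isIdempotentElem : IsIdempotentElem P
  range_le : LinearMap.range (P : X →ₗ[ℝ] X) ≤ U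
  finiteDimensional : FiniteDimensional ℝ (LinearMap.range (P : X →ₗ[ℝ] X))
  finrank_range : Module.finrank ℝ (LinearMap.range (P : X →ₗ[ℝ] X)) = n
  comp_eq : A ∘L P = A
  add_apply_mem : ∀ x, (K + A) (P x) ∈ L
  isCompactOperator : IsCompactOperator A

theorem isCorrectionStage_zero : IsCorrectionStage K U L 0 0 0 where
  isIdempotentElem := IsIdempotentElem.zero
  range_le := by simp
  finiteDimensional := by
    rw [ContinuousLinearMap.toLinearMap_zero, LinearMap.range_zero]; infer_instance
  finrank_range := by rw [ContinuousLinearMap.toLinearMap_zero, LinearMap.range_zero, finrank_bot]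
  comp_eq := by simp
  add_apply_mem := by simp
  isCompactOperator := isCompactOperator_zero

namespace IsCorrectionStage

variable {K U L} {n : ℕ} {P : X →L[ℝ] X} {A : X →L[ℝ] Y}

theorem succ (h : IsCorrectionStage K U L n P A) {u : X} (hu : u ∈ U) (hPu : P u = 0)
    {f : StrongDual ℝ X} (hfP : f ∘L P = 0) (hfu : f u = 1) {z : Y} (hz : z ∈ L) :
    IsCorrectionStage K U L (n + 1) (P + f.smulRight u) (A + f.smulRight (z - K u)) := by
  have hrange := h.isIdempotentElem.range_add_smulRight hfP hPu hfu
  have hfPx (x : X) : f (P x) = 0 := DFunLike.congr_fun hfP x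
  have hAP (x : X) : A (P x) = A x := DFunLike.congr_fun h.comp_eq x
  have hAu : A u = 0 := by rw [← hAP, hPu, map_zero]
  have hu0 : u ≠ 0 := by rintro rfl; simp at hfu
  have := h.finiteDimensional
  refine ⟨h.isIdempotentElem.add_smulRight hfP hPu hfu, ?_, ?_, ?_, ?_, fun x => ?_,
    h.isCompactOperator.add (isCompactOperator_smulRight f _)⟩
  · rw [hrange]
    exact sup_le h.range_le ((Submodule.span_singleton_le_iff_mem _ _).2 hu)
  · rw [hrange]; infer_instance
  · rw [hrange, Submodule.finrank_sup_span_singleton_of_notMem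
      (h.isIdempotentElem.notMem_range_of_apply_eq_zero hPu hu0), h.finrank_range]
  · ext x
    simp [hAP, hAu, hfPx, hfu]
  · have : (K + (A + f.smulRight (z - K u))) ((P + f.smulRight u) x) =
        (K + A) (P x) + f x • z := by
      simp [hAu, hfPx, hfu, smul_sub]
      abel
    rw [this]
    exact L.add_mem (h.add_apply_mem x) (L.smul_mem _ hz)

theorem exists_succ [CompleteSpace X] (h : IsCorrectionStage K U L n P A)
    (hU : IsClosed (U : Set X)) (hL : IsClosed (L : Set Y))
    (hnc : ¬ IsClosed ((U.map (K : X →ₗ[ℝ] Y) ⊔ L : Submodule ℝ Y) : Set Y))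
    {δ : ℝ} (hδ : 0 < δ) :
    ∃ P' A', IsCorrectionStage K U L (n + 1) P' A' ∧
      LinearMap.range (P : X →ₗ[ℝ] X) ≤ LinearMap.range (P' : X →ₗ[ℝ] X) ∧
      (∀ x ∈ LinearMap.range (P : X →ₗ[ℝ] X), A' x = A x) ∧ ‖A' - A‖ ≤ δ := by
  have := h.finiteDimensional
  have hC : 0 < ‖1 - P‖ + 1 := by positivity
  -- The functional `f` below has norm at most `‖1 - P‖` whatever `u` is, hence this choice of `ε`.
  obtain ⟨u, hu, hPu, hu1, z, hz, hKuz⟩ := exists_norm_eq_one_norm_sub_lt_of_not_isClosed K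
    h.isIdempotentElem h.range_le hU hL hnc (div_pos hδ hC)
  obtain ⟨φ, hφ1, hφu⟩ := exists_dual_vector ℝ u (by simp [hu1])
  set f := φ ∘L (1 - P)
  have hfP : f ∘L P = 0 := by ext x; simp [f, h.isIdempotentElem.apply_apply]
  have hfu : f u = 1 := by simp [f, hPu, hφu, hu1]
  have hf : ‖f‖ ≤ ‖1 - P‖ + 1 := by
    calc ‖f‖ ≤ ‖φ‖ * ‖1 - P‖ := ContinuousLinearMap.opNorm_comp_le _ _
      _ ≤ ‖1 - P‖ + 1 := by rw [hφ1, one_mul]; linarith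
  refine ⟨_, _, h.succ hu hPu hfP hfu hz, ?_, ?_, ?_⟩
  · rw [h.isIdempotentElem.range_add_smulRight hfP hPu hfu]
    exact le_sup_left
  · rintro _ ⟨x, rfl⟩
    have hfPx : f (P x) = 0 := DFunLike.congr_fun hfP x
    simp [hfPx]
  · rw [add_sub_cancel_left, ContinuousLinearMap.norm_smulRight_apply, norm_sub_rev]
    calc ‖f‖ * ‖K u - z‖ ≤ (‖1 - P‖ + 1) * (δ / (‖1 - P‖ + 1)) :=
          mul_le_mul hf hKuz.le (norm_nonneg _) hC.le
      _ = δ := mul_div_cancel₀ δ hC.ne'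

end IsCorrectionStage

variable {K U L}

theorem exists_seq_isCorrectionStage [CompleteSpace X] (hU : IsClosed (U : Set X))
    (hL : IsClosed (L : Set Y))
    (hnc : ¬ IsClosed ((U.map (K : X →ₗ[ℝ] Y) ⊔ L : Submodule ℝ Y) : Set Y))
    {δ : ℕ → ℝ} (hδ : ∀ n, 0 < δ n) :
    ∃ (P : ℕ → X →L[ℝ] X) (A : ℕ → X →L[ℝ] Y), A 0 = 0 ∧ ∀ n,
      IsCorrectionStage K U L n (P n) (A n) ∧
      LinearMap.range (P n : X →ₗ[ℝ] X) ≤ LinearMap.range (P (n + 1) : X →ₗ[ℝ] X) ∧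
      (∀ x ∈ LinearMap.range (P n : X →ₗ[ℝ] X), A (n + 1) x = A n x) ∧
      ‖A (n + 1) - A n‖ ≤ δ n := by
  choose! P' A' hstage hrange hagree hnorm using
    fun n (P : X →L[ℝ] X) (A : X →L[ℝ] Y) (h : IsCorrectionStage K U L n P A) =>
      h.exists_succ hU hL hnc (hδ n)
  let s : ℕ → (X →L[ℝ] X) × (X →L[ℝ] Y) := fun n =>
    Nat.rec (0, 0) (fun n s => (P' n s.1 s.2, A' n s.1 s.2)) n
  have hs (n : ℕ) : IsCorrectionStage K U L n (s n).1 (s n).2 := by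
    induction n with
    | zero => exact isCorrectionStage_zero K U L
    | succ n ih => exact hstage n _ _ ih
  exact ⟨fun n => (s n).1, fun n => (s n).2, rfl, fun n =>
    ⟨hs n, hrange n _ _ (hs n), hagree n _ _ (hs n), hnorm n _ _ (hs n)⟩⟩

theorem exists_isCompactOperator_norm_le_map_le [CompleteSpace X] [CompleteSpace Y]
    (hU : IsClosed (U : Set X)) (hL : IsClosed (L : Set Y))
    (hnc : ¬ IsClosed ((U.map (K : X →ₗ[ℝ] Y) ⊔ L : Submodule ℝ Y) : Set Y))
    {ε : ℝ} (hε : 0 < ε) :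
    ∃ K₁ : X →L[ℝ] Y, IsCompactOperator K₁ ∧ ‖K₁‖ ≤ ε ∧ ∀ n, ∃ E : Submodule ℝ X, E ≤ U ∧
      Module.finrank ℝ E = n ∧ E.map ((K + K₁ : X →L[ℝ] Y) : X →ₗ[ℝ] Y) ≤ L := by
  obtain ⟨P, A, hA0, hs⟩ := exists_seq_isCorrectionStage hU hL hnc
    (δ := fun n => ε / 2 / 2 ^ n) fun n => by positivity
  choose hstage hmono hagree hstep using hs
  have hdist (n : ℕ) : dist (A n) (A (n + 1)) ≤ ε / 2 / 2 ^ n := by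
    rw [dist_comm, dist_eq_norm]; exact hstep n
  obtain ⟨K₁, hlim⟩ := cauchySeq_tendsto_of_complete (cauchySeq_of_le_geometric_two hdist)
  have hrange : Monotone fun n => LinearMap.range (P n : X →ₗ[ℝ] X) :=
    monotone_nat_of_le_succ hmono
  have hstable (n : ℕ) (x : X) (hx : x ∈ LinearMap.range (P n : X →ₗ[ℝ] X)) (m : ℕ)
      (hm : n ≤ m) : A m x = A n x := by
    induction m, hm using Nat.le_induction with
    | base => rfl
    | succ m hnm ih => rw [hagree m x (hrange hnm hx), ih]
  have hK₁ (n : ℕ) (x : X) (hx : x ∈ LinearMap.range (P n : X →ₗ[ℝ] X)) : K₁ x = A n x :=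
    tendsto_nhds_unique (((continuous_eval_const x).tendsto K₁).comp hlim)
      (tendsto_const_nhds.congr' (Filter.eventually_atTop.2
        ⟨n, fun m hm => (hstable n x hx m hm).symm⟩))
  refine ⟨K₁, isCompactOperator_of_tendsto hlim (.of_forall fun n => (hstage n).isCompactOperator),
    ?_, fun n => ⟨_, (hstage n).range_le, (hstage n).finrank_range, ?_⟩⟩
  · simpa [hA0] using dist_le_of_le_geometric_two_of_tendsto₀ hdist hlim
  · rintro _ ⟨_, ⟨y, rfl⟩, rfl⟩
    have hy : K₁ (P n y) = A n (P n y) := hK₁ n _ ⟨y, rfl⟩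
    simpa [hy] using (hstage n).add_apply_mem y

end

theorem exists_compact_perturbation_infinite_dimensional_intersection_general
    {X Y : Type*} [NormedAddCommGroup X] [NormedSpace ℝ X] [CompleteSpace X]
    [NormedAddCommGroup Y] [NormedSpace ℝ Y] [CompleteSpace Y]
    (K : X →L[ℝ] Y) (U : Submodule ℝ X) (hU : IsClosed (U : Set X))
    (hbelow : ∃ c : ℝ, 0 < c ∧ ∀ u ∈ U, c * ‖u‖ ≤ ‖K u‖)
    (L : Submodule ℝ Y) (hL : IsClosed (L : Set Y))
    (hnc : ¬ IsClosed ((U.map (K : X →ₗ[ℝ] Y) ⊔ L : Submodule ℝ Y) : Set Y)) :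
    ∃ K₁ : X →L[ℝ] Y, IsCompactOperator K₁ ∧
      ¬ FiniteDimensional ℝ ↥(U.map ((K + K₁ : X →L[ℝ] Y) : X →ₗ[ℝ] Y) ⊓ L) := by
  obtain ⟨c, hc, hK⟩ := hbelow
  obtain ⟨K₁, hK₁, hnorm, hE⟩ := exists_isCompactOperator_norm_le_map_le hU hL hnc (half_pos hc)
  exact ⟨K₁, hK₁, not_finiteDimensional_map_inf
    (injOn_add_of_norm_lt hK (hnorm.trans_lt (half_lt_self hc))) hE⟩

theorem exists_compact_perturbation_infinite_dimensional_intersection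
    {X Y : Type*} [NormedAddCommGroup X] [NormedSpace ℝ X] [CompleteSpace X]
    [NormedAddCommGroup Y] [NormedSpace ℝ Y] [CompleteSpace Y]
    (K : X →L[ℝ] Y) (U : Submodule ℝ X) (hU : IsClosed (U : Set X))
    (hUinf : ¬ FiniteDimensional ℝ U)
    (hbelow : ∃ c : ℝ, 0 < c ∧ ∀ u ∈ U, c * ‖u‖ ≤ ‖K u‖)
    (L : Submodule ℝ Y) (hL : IsClosed (L : Set Y))
    (hfin : FiniteDimensional ℝ ↥(U.map (K : X →ₗ[ℝ] Y) ⊓ L))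
    (hnc : ¬ IsClosed ((U.map (K : X →ₗ[ℝ] Y) ⊔ L : Submodule ℝ Y) : Set Y)) :
    ∃ K₁ : X →L[ℝ] Y, IsCompactOperator K₁ ∧
      ¬ FiniteDimensional ℝ ↥(U.map ((K + K₁ : X →L[ℝ] Y) : X →ₗ[ℝ] Y) ⊓ L) :=
  exists_compact_perturbation_infinite_dimensional_intersection_general K U hU hbelow L hL hnc
end
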